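/- Let A be a Frobenius algebra and define Δ : CH̄^n(A,A) → CH̄^{n−1}(A,A) on normalized Hochschild cochains by η(a₀, (Δf)(a₁,…,a_{n−1})) = Σ_{i=0}^{n−1} (−1)^{i(n−1)} η(1, f(a_i, a_{i+1}, …, a_{i−1})) (cyclic sum over all cyclic rotations of (a₀,…,a_{n−1}) with the sign of the signed cyclic permutation). Then Δ² = 0. -/
import Mathlib


/-- Let `A` be a Frobenius algebra over a field `k` (finite-dimensional, unital, associative,
with nondegenerate symmetric invariant bilinear form `η`).  On normalized Hochschild
cochains define `Δ : CH̄^{n+2} → CH̄^{n+1}` by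
`η(a₀, (Δf)(a₁,…)) = Σ_i (−1)^{i·(deg f − 1)} η(1, f(a_i, a_{i+1}, …, a_{i−1}))`
(signed cyclic sum).  If `g` satisfies the defining relation of `Δf` and `h` that of `Δg`,
and `f` is normalized, then `h = 0`, i.e. `Δ² = 0`. -/
theorem stmt10 {k A : Type*} [Field k] [Ring A] [Algebra k A] [FiniteDimensional k A]
    (η : A →ₗ[k] A →ₗ[k] k)
    (hnd : ∀ a : A, (∀ b : A, η a b = 0) → a = 0)
    (hinv : ∀ a b c : A, η (a * b) c = η a (b * c))
    (hsym : ∀ a b : A, η a b = η b a)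
    (n : ℕ)
    (f : (Fin (n + 2) → A) → A)
    (hf : ∀ a : Fin (n + 2) → A, (∃ i, a i = 1) → f a = 0)
    (g : (Fin (n + 1) → A) → A)
    (hg : ∀ a : Fin (n + 2) → A,
      η (a 0) (g (fun j : Fin (n + 1) => a j.succ))
        = ∑ i : Fin (n + 2), ((-1 : k) ^ ((i : ℕ) * (n + 1))) *
            η 1 (f (fun j : Fin (n + 2) => a (i + j))))
    (h : (Fin n → A) → A)
    (hh : ∀ a : Fin (n + 1) → A,
      η (a 0) (h (fun j : Fin n => a j.succ))
        = ∑ i : Fin (n + 1), ((-1 : k) ^ ((i : ℕ) * n)) *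
            η 1 (g (fun j : Fin (n + 1) => a (i + j)))) :
    h = 0 := by
  have hg0 : ∀ c : Fin (n + 1) → A, η 1 (g c) = 0 := by
    intro c
    have := hg (Fin.cons 1 c)
    simp only [Fin.cons_zero, Fin.cons_succ] at this
    rw [this]
    refine Finset.sum_eq_zero fun i _ => ?_
    rw [hf _ ⟨-i, by rw [add_neg_cancel, Fin.cons_zero]⟩]
    simp
  funext b
  refine hnd _ fun x => ?_
  rw [hsym]
  have := hh (Fin.cons x b)
  simp only [Fin.cons_zero, Fin.cons_succ] at this
  rw [this]
  refine Finset.sum_eq_zero fun i _ => ?_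
  rw [hg0]
  simp
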